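/- arXiv:1606.00724 — 2 statements merged into one kernel-verified Lean document; each statement's English description precedes it below -/
import Mathlib

section
/- The following homogeneity relations hold for every t > 0: C(t) = D_0(√t) C(1) D_0(√t); M̄(t) = D_0(√t) M̄(1) D_0(√t); and e^{tB} = D_0(√t) e^{B} D_0(1/√t). -/
open MeasureTheory Matrix Finset

noncomputable section

/-- Index set for `ℝ^d` split into groups of sizes `p 0, …, p r`:
the element `⟨i, a⟩` is the `a`-th coordinate of the `i`-th group. -/
abbrev Idx (r : ℕ) (p : Fin (r + 1) → ℕ) : Type := (i : Fin (r + 1)) × Fin (p i)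

variable {r : ℕ} {p : Fin (r + 1) → ℕ}

/-- The dilation exponent `σ_j = 2i+1` for a coordinate `j` in group `i`. -/
def sigmaWt (j : Idx r p) : ℕ := 2 * (j.1 : ℕ) + 1

/-- The `B`-length `|β|_B = Σ_j σ_j β_j` of a multi-index `β`. -/
def bwt (β : Idx r p → ℕ) : ℕ := ∑ j, sigmaWt j * β j

/-- The homogeneous norm `[x]_B = Σ_j |x_j|^{1/σ_j}`. -/
def hnorm (x : Idx r p → ℝ) : ℝ := ∑ j, |x j| ^ (1 / (sigmaWt j : ℝ))

/-- Structural assumption on the matrix `B`: the group sizes are decreasing and positive,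
the only nonzero blocks are the subdiagonal ones `B_1, …, B_r`, and the block `B_i`
(of size `p i × p (i-1)`) has full rank `p i`. -/
structure IsKolB (B : Matrix (Idx r p) (Idx r p) ℝ) : Prop where
  anti : Antitone p
  ppos : ∀ i, 1 ≤ p i
  sparse : ∀ j k : Idx r p, (j.1 : ℕ) ≠ (k.1 : ℕ) + 1 → B j k = 0
  rk : ∀ i k : Fin (r + 1), (i : ℕ) = (k : ℕ) + 1 →
    (Matrix.of fun (a : Fin (p i)) (b : Fin (p k)) => B ⟨i, a⟩ ⟨k, b⟩).rank = p i

/-- Matrix exponential `e^M = Σ_n M^n / n!` (defined entrywise). -/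
def mexp (M : Matrix (Idx r p) (Idx r p) ℝ) : Matrix (Idx r p) (Idx r p) ℝ :=
  Matrix.of fun i j => ∑' n : ℕ, ((n.factorial : ℝ)⁻¹ • M ^ n) i j

/-- The `d×d` matrix whose top-left `p 0 × p 0` block is `A₀` and whose other entries vanish. -/
def embed0 (A₀ : Matrix (Fin (p 0)) (Fin (p 0)) ℝ) : Matrix (Idx r p) (Idx r p) ℝ :=
  Matrix.of fun j k =>
    if h : j.1 = 0 ∧ k.1 = 0 then
      A₀ (Fin.cast (congrArg p h.1) j.2) (Fin.cast (congrArg p h.2) k.2)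
    else 0

/-- The covariance matrix `C(t) = ∫_0^t e^{sB} A e^{sBᵀ} ds`. -/
def covMat (B A : Matrix (Idx r p) (Idx r p) ℝ) (t : ℝ) :
    Matrix (Idx r p) (Idx r p) ℝ :=
  Matrix.of fun j k => ∫ s in (0:ℝ)..t, (mexp (s • B) * A * (mexp (s • B))ᵀ) j k

/-- The Gaussian kernel
`Γ₀(t,x;s,y) = (2π)^{-d/2} |det C(s-t)|^{-1/2} exp(-⟨C(s-t)⁻¹(y-e^{(s-t)B}x), y-e^{(s-t)B}x⟩/2)`. -/
def gauss (B A : Matrix (Idx r p) (Idx r p) ℝ)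
    (t : ℝ) (x : Idx r p → ℝ) (s : ℝ) (y : Idx r p → ℝ) : ℝ :=
  (2 * Real.pi) ^ (-(Fintype.card (Idx r p) : ℝ) / 2) *
    |(covMat B A (s - t)).det| ^ (-(1:ℝ) / 2) *
    Real.exp (-(1/2) *
      ((covMat B A (s - t))⁻¹ *ᵥ (y - mexp ((s - t) • B) *ᵥ x)) ⬝ᵥ
        (y - mexp ((s - t) • B) *ᵥ x))

/-- Partial derivative `∂_{x_i}`. -/
def pdx (i : Idx r p) (f : (Idx r p → ℝ) → ℝ) : (Idx r p → ℝ) → ℝ :=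
  fun x => fderiv ℝ f x (Pi.single i 1)

/-- Iterated partial derivative `D^β = ∂_{x_1}^{β_1} ⋯ ∂_{x_d}^{β_d}`. -/
def Dx (β : Idx r p → ℕ) (f : (Idx r p → ℝ) → ℝ) : (Idx r p → ℝ) → ℝ :=
  (Finset.univ (α := Idx r p)).toList.foldr (fun i g => (pdx i)^[β i] g) f

/-- The indices of the first group (coordinates `1, …, p_0`). -/
def G0set (r : ℕ) (p : Fin (r + 1) → ℕ) : Finset (Idx r p) :=
  Finset.univ.filter fun i => (i.1 : ℕ) = 0

/-- A vector supported in the coordinates of the first group. -/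
def suppG0 (ξ : Idx r p → ℝ) : Prop := ∀ i : Idx r p, (i.1 : ℕ) ≠ 0 → ξ i = 0

/-- The vector field `Y f(t,x) = ⟨Bx, ∇_x f⟩ + ∂_t f`. -/
def Yop (B : Matrix (Idx r p) (Idx r p) ℝ)
    (f : ℝ → (Idx r p → ℝ) → ℝ) : ℝ → (Idx r p → ℝ) → ℝ :=
  fun t x => (∑ j, (B *ᵥ x) j * pdx j (f t) x) + deriv (fun τ => f τ x) t

/-- The derivative `Y^k ∂_x^β f`. -/
def YDx (B : Matrix (Idx r p) (Idx r p) ℝ) (k : ℕ) (β : Idx r p → ℕ)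
    (f : ℝ → (Idx r p → ℝ) → ℝ) : ℝ → (Idx r p → ℝ) → ℝ :=
  (Yop B)^[k] (fun t => Dx β (f t))

/-- The multi-index factorial `β! = Π_j (β_j)!`. -/
def mfact (β : Idx r p → ℕ) : ℕ := ∏ j, (β j).factorial

/-- The `n`-th order intrinsic Taylor polynomial of `a` centered at `z̄ = (tb, xb)`:
`T_n(a,z̄)(t,x) = Σ_{2k+|β|_B ≤ n} (1/(k!β!)) (Y^k ∂^β a)(z̄) (t-tb)^k (x-e^{(t-tb)B}xb)^β`,
with `T_n ≡ 0` for `n < 0`. -/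
def Tpoly (B : Matrix (Idx r p) (Idx r p) ℝ) (a : ℝ → (Idx r p → ℝ) → ℝ)
    (tb : ℝ) (xb : Idx r p → ℝ) (n : ℤ) : ℝ → (Idx r p → ℝ) → ℝ :=
  fun t x =>
    ∑ k ∈ Finset.range (n.toNat + 1),
      ∑ β ∈ Fintype.piFinset (fun _ : Idx r p => Finset.range (n.toNat + 1)),
        if 2 * (k : ℤ) + (bwt β : ℤ) ≤ n then
          ((k.factorial * mfact β : ℕ) : ℝ)⁻¹ * YDx B k β a tb xb * (t - tb) ^ k *
            ∏ j, (x j - (mexp ((t - tb) • B) *ᵥ xb) j) ^ β j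
        else 0

/-- `M̄(t) = e^{-tB} C(t) e^{-tBᵀ}`. -/
def Mbar (B A : Matrix (Idx r p) (Idx r p) ℝ) (t : ℝ) : Matrix (Idx r p) (Idx r p) ℝ :=
  mexp (-(t • B)) * covMat B A t * (mexp (-(t • B)))ᵀ

/-- The first order operator `M_i(t,x) f = (e^{tB}x)_i f + (e^{tB} M̄(t) ∇_x f)_i`. -/
def Mop (B A : Matrix (Idx r p) (Idx r p) ℝ) (τ : ℝ) (i : Idx r p)
    (f : (Idx r p → ℝ) → ℝ) : (Idx r p → ℝ) → ℝ :=
  fun x => (mexp (τ • B) *ᵥ x) i * f x + ((mexp (τ • B) * Mbar B A τ) *ᵥ fun j => pdx j f x) i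

/-- The composition `M^β = M_1^{β_1} ∘ ⋯ ∘ M_d^{β_d}`. -/
def Mpow (B A : Matrix (Idx r p) (Idx r p) ℝ) (τ : ℝ) (β : Idx r p → ℕ)
    (f : (Idx r p → ℝ) → ℝ) : (Idx r p → ℝ) → ℝ :=
  (Finset.univ (α := Idx r p)).toList.foldr (fun i g => (Mop B A τ i)^[β i] g) f

/-- The shifted operator `(M_i(τ,x) - c) f`. -/
def MopShift (B A : Matrix (Idx r p) (Idx r p) ℝ) (τ : ℝ) (c : ℝ) (i : Idx r p)
    (f : (Idx r p → ℝ) → ℝ) : (Idx r p → ℝ) → ℝ :=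
  fun x => Mop B A τ i f x - c * f x

/-- The composition `(M(τ,x) - c)^β` of shifted operators. -/
def MshiftPow (B A : Matrix (Idx r p) (Idx r p) ℝ) (τ : ℝ) (c : Idx r p → ℝ)
    (β : Idx r p → ℕ) (f : (Idx r p → ℝ) → ℝ) : (Idx r p → ℝ) → ℝ :=
  (Finset.univ (α := Idx r p)).toList.foldr (fun i g => (MopShift B A τ (c i) i)^[β i] g) f

/-- The operator `W_i(τ) f = (e^{-τBᵀ} ∇_x f)_i`. -/
def Wop (B : Matrix (Idx r p) (Idx r p) ℝ) (τ : ℝ) (i : Idx r p)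
    (f : (Idx r p → ℝ) → ℝ) : (Idx r p → ℝ) → ℝ :=
  fun x => (mexp (-(τ • Bᵀ)) *ᵥ fun j => pdx j f x) i

/-- The composition `W^β(τ) = W_1^{β_1}(τ) ∘ ⋯ ∘ W_d^{β_d}(τ)`. -/
def Wpow (B : Matrix (Idx r p) (Idx r p) ℝ) (τ : ℝ) (β : Idx r p → ℕ)
    (f : (Idx r p → ℝ) → ℝ) : (Idx r p → ℝ) → ℝ :=
  (Finset.univ (α := Idx r p)).toList.foldr (fun i g => (Wop B τ i)^[β i] g) f

/-- The Taylor polynomial `T_n(a,z̄)(s,·)` with the commuting operators `M_i(τ,x)` substituted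
for the spatial arguments. -/
def TpolyOp (B A : Matrix (Idx r p) (Idx r p) ℝ) (a : ℝ → (Idx r p → ℝ) → ℝ)
    (tb : ℝ) (xb : Idx r p → ℝ) (n : ℤ) (s τ : ℝ)
    (f : (Idx r p → ℝ) → ℝ) : (Idx r p → ℝ) → ℝ :=
  fun x =>
    ∑ k ∈ Finset.range (n.toNat + 1),
      ∑ β ∈ Fintype.piFinset (fun _ : Idx r p => Finset.range (n.toNat + 1)),
        if 2 * (k : ℤ) + (bwt β : ℤ) ≤ n then
          ((k.factorial * mfact β : ℕ) : ℝ)⁻¹ * YDx B k β a tb xb * (s - tb) ^ k *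
            MshiftPow B A τ (mexp ((s - tb) • B) *ᵥ xb) β f x
        else 0

/-- The operator `G_n(t,s,x)` of the expansion. -/
def Gop (B A : Matrix (Idx r p) (Idx r p) ℝ)
    (a : Idx r p → Idx r p → ℝ → (Idx r p → ℝ) → ℝ)
    (aD : Idx r p → ℝ → (Idx r p → ℝ) → ℝ) (tb : ℝ) (xb : Idx r p → ℝ)
    (n : ℤ) (t s : ℝ) (f : (Idx r p → ℝ) → ℝ) : (Idx r p → ℝ) → ℝ :=
  fun x =>
    (1/2) * ∑ i ∈ G0set r p, ∑ j ∈ G0set r p,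
        (TpolyOp B A (a i j) tb xb n s (s - t) (Wop B (s - t) i (Wop B (s - t) j f)) x
          - TpolyOp B A (a i j) tb xb (n - 1) s (s - t) (Wop B (s - t) i (Wop B (s - t) j f)) x)
      + ∑ i ∈ G0set r p,
        (TpolyOp B A (aD i) tb xb (n - 1) s (s - t) (Wop B (s - t) i f) x
          - TpolyOp B A (aD i) tb xb (n - 2) s (s - t) (Wop B (s - t) i f) x)

/-- `((K_n - K_{n-1}) g)(s,ξ)` for a purely spatial function `g`. -/
def Kdiff (B : Matrix (Idx r p) (Idx r p) ℝ)
    (a : Idx r p → Idx r p → ℝ → (Idx r p → ℝ) → ℝ)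
    (aD : Idx r p → ℝ → (Idx r p → ℝ) → ℝ) (tb : ℝ) (xb : Idx r p → ℝ)
    (n : ℤ) (g : (Idx r p → ℝ) → ℝ) (s : ℝ) (ξ : Idx r p → ℝ) : ℝ :=
  (1/2) * ∑ i ∈ G0set r p, ∑ j ∈ G0set r p,
      (Tpoly B (a i j) tb xb n s ξ - Tpoly B (a i j) tb xb (n - 1) s ξ) * pdx i (pdx j g) ξ
    + ∑ i ∈ G0set r p, (Tpoly B (aD i) tb xb (n - 1) s ξ - Tpoly B (aD i) tb xb (n - 2) s ξ) *
        pdx i g ξ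

/-- The matrix `A(z̄)` with top-left block `(a_{ij}(z̄))` and zeros elsewhere. -/
def AzMat (a : Idx r p → Idx r p → ℝ → (Idx r p → ℝ) → ℝ) (tb : ℝ) (xb : Idx r p → ℝ) :
    Matrix (Idx r p) (Idx r p) ℝ :=
  Matrix.of fun i j => if (i.1 : ℕ) = 0 ∧ (j.1 : ℕ) = 0 then a i j tb xb else 0

/-- `u₀(t,x) = ∫ Γ₀(t,x;T,y) φ(y) dy`. -/
def u0fn (B A : Matrix (Idx r p) (Idx r p) ℝ) (T : ℝ) (φ : (Idx r p → ℝ) → ℝ)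
    (t : ℝ) (x : Idx r p → ℝ) : ℝ :=
  ∫ y : Idx r p → ℝ, gauss B A t x T y * φ y

/-- The Duhamel recursion: `u_0 = ∫ Γ₀ φ` and
`u_n(t,x) = ∫_t^T ∫ Γ₀(t,x;s,ξ) Σ_{h=1}^n ((K_h - K_{h-1}) u_{n-h})(s,ξ) dξ ds`. -/
def useq (B : Matrix (Idx r p) (Idx r p) ℝ)
    (a : Idx r p → Idx r p → ℝ → (Idx r p → ℝ) → ℝ)
    (aD : Idx r p → ℝ → (Idx r p → ℝ) → ℝ) (tb : ℝ) (xb : Idx r p → ℝ)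
    (T : ℝ) (φ : (Idx r p → ℝ) → ℝ) : ℕ → ℝ → (Idx r p → ℝ) → ℝ
  | 0 => u0fn B (AzMat a tb xb) T φ
  | n + 1 => fun t x =>
      ∫ s in t..T, ∫ ξ : Idx r p → ℝ, gauss B (AzMat a tb xb) t x s ξ *
        ∑ h ∈ Finset.range (n + 1),
          Kdiff B a aD tb xb ((h : ℤ) + 1) (useq B a aD tb xb T φ (n - h) s) s ξ
  termination_by n => n
  decreasing_by omega

/-- Nested integral of a composition of operators `G_{i_1}(t,s_1) ⋯ G_{i_h}(t,s_h)` applied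
to `u`, over the simplex `lo ≤ s_1 ≤ ⋯ ≤ s_h ≤ T`. -/
def Lrec (B A : Matrix (Idx r p) (Idx r p) ℝ)
    (a : Idx r p → Idx r p → ℝ → (Idx r p → ℝ) → ℝ)
    (aD : Idx r p → ℝ → (Idx r p → ℝ) → ℝ) (tb : ℝ) (xb : Idx r p → ℝ)
    (t T : ℝ) (u : (Idx r p → ℝ) → ℝ) : List ℕ → ℝ → (Idx r p → ℝ) → ℝ
  | [] => fun _ => u
  | m :: ms => fun lo x =>
      ∫ s in lo..T, Gop B A a aD tb xb (m : ℤ) t s (Lrec B A a aD tb xb t T u ms s) x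

/-- The operator `L_n(t,T,x) = Σ_{h=1}^n ∫_t^T ds_1 ⋯ ∫_{s_{h-1}}^T ds_h
Σ_{i_1+⋯+i_h=n, i_j ≥ 1} G_{i_1}(t,s_1) ⋯ G_{i_h}(t,s_h)`. -/
def Lop (B A : Matrix (Idx r p) (Idx r p) ℝ)
    (a : Idx r p → Idx r p → ℝ → (Idx r p → ℝ) → ℝ)
    (aD : Idx r p → ℝ → (Idx r p → ℝ) → ℝ) (tb : ℝ) (xb : Idx r p → ℝ)
    (n : ℕ) (t T : ℝ) (u : (Idx r p → ℝ) → ℝ) : (Idx r p → ℝ) → ℝ :=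
  fun x => ∑ h ∈ Finset.Icc 1 n,
    ∑ iv ∈ (Fintype.piFinset fun _ : Fin h => Finset.Icc 1 n).filter (fun iv => ∑ j, iv j = n),
      Lrec B A a aD tb xb t T u (List.ofFn iv) t x

/-- The dilation matrix `D₀(λ) = diag(λ^{σ_1}, …, λ^{σ_d})`. -/
def D0mat (r : ℕ) (p : Fin (r + 1) → ℕ) (lam : ℝ) : Matrix (Idx r p) (Idx r p) ℝ :=
  Matrix.diagonal fun j => lam ^ sigmaWt j

/-- The index set `J_n` of Lemma A.8. -/
def Jset (r : ℕ) (p : Fin (r + 1) → ℕ) (n : ℕ) :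
    Finset ((Idx r p → ℕ) × (Idx r p → ℕ)) :=
  ((Fintype.piFinset fun _ : Idx r p => Finset.range (3 * n + 1)) ×ˢ
    (Fintype.piFinset fun _ : Idx r p => Finset.range (n + 1))).filter
    fun q => 1 ≤ ∑ j, q.1 j ∧ ∑ j, q.1 j ≤ 3 * n ∧ bwt q.2 ≤ n ∧
      0 ≤ (bwt q.1 : ℤ) - (bwt q.2 : ℤ) + (n : ℤ)

/-- The index set of pairs `(δ, α)` with `|δ| + |α| ≤ |β|` and `|δ|_B - |α|_B ≤ |β|_B`. -/
def Sset (β : Idx r p → ℕ) : Finset ((Idx r p → ℕ) × (Idx r p → ℕ)) :=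
  ((Fintype.piFinset fun _ : Idx r p => Finset.range (∑ j, β j + 1)) ×ˢ
    (Fintype.piFinset fun _ : Idx r p => Finset.range (∑ j, β j + 1))).filter
    fun q => (∑ j, q.1 j) + (∑ j, q.2 j) ≤ ∑ j, β j ∧
      (bwt q.1 : ℤ) - (bwt q.2 : ℤ) ≤ (bwt β : ℤ)

/-- The index set of multi-indices `α` with `|α| = |β|` and `|α|_B ≥ |β|_B`. -/
def Wset (β : Idx r p → ℕ) : Finset (Idx r p → ℕ) :=
  (Fintype.piFinset fun _ : Idx r p => Finset.range (∑ j, β j + 1)).filter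
    fun α => ∑ j, α j = ∑ j, β j ∧ bwt β ≤ bwt α

/-! Conjugation by `D₀(λ)` multiplies the `(j, k)` entry by `λ^(σ_j - σ_k)`, so it scales a
matrix supported on the subdiagonal blocks by `λ²`, and `D₀(λ) A D₀(λ) = λ² A`. Thus `t • B` and
`t • A` are obtained from `B` and `A` by conjugation with `D₀(√t)`. The substitution `s = t u`
identifies `C(t)` and `M̄(t)` of `(B, A)` with `C(1)` and `M̄(1)` of `(t • B, t • A)`, and the
exponential commutes with conjugation. -/

-- Any submultiplicative norm serves to sum the series; it induces the entrywise topology.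
open scoped Norms.Operator in
theorem mexp_eq_exp (M : Matrix (Idx r p) (Idx r p) ℝ) : mexp M = NormedSpace.exp M := by
  ext i j
  exact ((Pi.hasSum.mp (Pi.hasSum.mp (NormedSpace.exp_series_hasSum_exp' (𝕂 := ℝ) M) i)) j).tsum_eq

theorem D0mat_mul_D0mat (a b : ℝ) : D0mat r p a * D0mat r p b = D0mat r p (a * b) := by
  simp [D0mat, mul_pow]

theorem D0mat_one : D0mat r p 1 = 1 := by
  simp [D0mat]

theorem D0mat_transpose (a : ℝ) : (D0mat r p a)ᵀ = D0mat r p a :=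
  diagonal_transpose _

theorem D0mat_mul_D0mat_inv {a : ℝ} (ha : a ≠ 0) : D0mat r p a * D0mat r p a⁻¹ = 1 := by
  rw [D0mat_mul_D0mat, mul_inv_cancel₀ ha, D0mat_one]

theorem D0mat_inv_mul_D0mat {a : ℝ} (ha : a ≠ 0) : D0mat r p a⁻¹ * D0mat r p a = 1 := by
  rw [D0mat_mul_D0mat, inv_mul_cancel₀ ha, D0mat_one]

theorem D0mat_inv {a : ℝ} (ha : a ≠ 0) : (D0mat r p a)⁻¹ = D0mat r p a⁻¹ :=
  inv_eq_right_inv (D0mat_mul_D0mat_inv ha)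

theorem isUnit_D0mat {a : ℝ} (ha : a ≠ 0) : IsUnit (D0mat r p a) :=
  IsUnit.of_mul_eq_one _ (D0mat_mul_D0mat_inv ha)

theorem D0mat_mul_mul_D0mat_apply (a b : ℝ) (M : Matrix (Idx r p) (Idx r p) ℝ) (j k : Idx r p) :
    (D0mat r p a * M * D0mat r p b) j k = a ^ sigmaWt j * M j k * b ^ sigmaWt k := by
  simp [D0mat]

theorem smul_D0mat_conj (c a : ℝ) (M : Matrix (Idx r p) (Idx r p) ℝ) :
    c • (D0mat r p a * M * D0mat r p a⁻¹) = D0mat r p a * (c • M) * D0mat r p a⁻¹ := by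
  rw [Matrix.mul_smul, Matrix.smul_mul]

theorem mexp_D0mat_conj {a : ℝ} (ha : a ≠ 0) (M : Matrix (Idx r p) (Idx r p) ℝ) :
    mexp (D0mat r p a * M * D0mat r p a⁻¹) = D0mat r p a * mexp M * D0mat r p a⁻¹ := by
  simpa only [mexp_eq_exp, D0mat_inv ha] using
    Matrix.exp_conj _ M (isUnit_D0mat (r := r) (p := p) ha)

theorem D0mat_conj_mul_mul_transpose {a : ℝ} (ha : a ≠ 0) (E N : Matrix (Idx r p) (Idx r p) ℝ) :
    D0mat r p a * E * D0mat r p a⁻¹ * (D0mat r p a * N * D0mat r p a) *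
        (D0mat r p a * E * D0mat r p a⁻¹)ᵀ
      = D0mat r p a * (E * N * Eᵀ) * D0mat r p a := by
  simp only [transpose_mul, D0mat_transpose, Matrix.mul_assoc]
  rw [← Matrix.mul_assoc (D0mat r p a⁻¹) (D0mat r p a), D0mat_inv_mul_D0mat ha, Matrix.one_mul,
    ← Matrix.mul_assoc (D0mat r p a) (D0mat r p a⁻¹), D0mat_mul_D0mat_inv ha, Matrix.one_mul]

theorem D0mat_conj_of_subdiag {a : ℝ} (ha : a ≠ 0) {M : Matrix (Idx r p) (Idx r p) ℝ}
    (hM : ∀ j k : Idx r p, (j.1 : ℕ) ≠ (k.1 : ℕ) + 1 → M j k = 0) :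
    D0mat r p a * M * D0mat r p a⁻¹ = a ^ 2 • M := by
  ext j k
  rw [D0mat_mul_mul_D0mat_apply, Matrix.smul_apply, smul_eq_mul]
  by_cases hjk : (j.1 : ℕ) = (k.1 : ℕ) + 1
  · have hσ : sigmaWt j = sigmaWt k + 2 := by simp only [sigmaWt, hjk]; ring
    rw [hσ, pow_add, inv_pow]
    field_simp
  · simp [hM j k hjk]

theorem D0mat_conj_embed0 (a : ℝ) (A₀ : Matrix (Fin (p 0)) (Fin (p 0)) ℝ) :
    D0mat r p a * embed0 A₀ * D0mat r p a = a ^ 2 • embed0 (r := r) A₀ := by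
  ext j k
  rw [D0mat_mul_mul_D0mat_apply, Matrix.smul_apply, smul_eq_mul]
  by_cases hjk : j.1 = 0 ∧ k.1 = 0
  · simp only [sigmaWt, hjk.1, hjk.2, Fin.val_zero]
    ring
  · simp [embed0, hjk]

theorem covMat_mul (c t : ℝ) (B A : Matrix (Idx r p) (Idx r p) ℝ) :
    covMat B A (c * t) = covMat (c • B) (c • A) t := by
  ext j k
  have hsubst := intervalIntegral.smul_integral_comp_mul_left
    (fun s => (mexp (s • B) * A * (mexp (s • B))ᵀ) j k) c (a := 0) (b := t)
  rw [mul_zero, smul_eq_mul, ← intervalIntegral.integral_const_mul] at hsubst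
  simp only [covMat, of_apply, ← hsubst]
  refine intervalIntegral.integral_congr fun u _ => ?_
  rw [mul_comm c u, ← smul_smul, Matrix.mul_smul, Matrix.smul_mul, Matrix.smul_apply, smul_eq_mul]

theorem Mbar_mul (c t : ℝ) (B A : Matrix (Idx r p) (Idx r p) ℝ) :
    Mbar B A (c * t) = Mbar (c • B) (c • A) t := by
  rw [Mbar, Mbar, covMat_mul, mul_comm c t, smul_smul]

theorem covMat_D0mat_conj {a : ℝ} (ha : a ≠ 0) (B A : Matrix (Idx r p) (Idx r p) ℝ) (t : ℝ) :
    covMat (D0mat r p a * B * D0mat r p a⁻¹) (D0mat r p a * A * D0mat r p a) t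
      = D0mat r p a * covMat B A t * D0mat r p a := by
  ext j k
  simp only [covMat, D0mat_mul_mul_D0mat_apply, of_apply, smul_D0mat_conj, mexp_D0mat_conj ha,
    D0mat_conj_mul_mul_transpose ha]
  rw [← intervalIntegral.integral_const_mul, ← intervalIntegral.integral_mul_const]

theorem Mbar_D0mat_conj {a : ℝ} (ha : a ≠ 0) (B A : Matrix (Idx r p) (Idx r p) ℝ) (t : ℝ) :
    Mbar (D0mat r p a * B * D0mat r p a⁻¹) (D0mat r p a * A * D0mat r p a) t
      = D0mat r p a * Mbar B A t * D0mat r p a := by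
  rw [Mbar, Mbar, covMat_D0mat_conj ha, ← neg_smul, smul_D0mat_conj, mexp_D0mat_conj ha,
    D0mat_conj_mul_mul_transpose ha, neg_smul]

theorem homogeneity_relations_general {r : ℕ} {p : Fin (r + 1) → ℕ}
    (B : Matrix (Idx r p) (Idx r p) ℝ) (hB : IsKolB B)
    (A₀ : Matrix (Fin (p 0)) (Fin (p 0)) ℝ)
    (t : ℝ) (ht : 0 < t) :
    covMat B (embed0 A₀) t
        = D0mat r p (Real.sqrt t) * covMat B (embed0 A₀) 1 * D0mat r p (Real.sqrt t) ∧
    Mbar B (embed0 A₀) t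
        = D0mat r p (Real.sqrt t) * Mbar B (embed0 A₀) 1 * D0mat r p (Real.sqrt t) ∧
    mexp (t • B) = D0mat r p (Real.sqrt t) * mexp B * D0mat r p (1 / Real.sqrt t) := by
  obtain ⟨a, ha, rfl⟩ : ∃ a, 0 < a ∧ t = a ^ 2 :=
    ⟨√t, Real.sqrt_pos.2 ht, (Real.sq_sqrt ht.le).symm⟩
  have hB_conj : a ^ 2 • B = D0mat r p a * B * D0mat r p a⁻¹ :=
    (D0mat_conj_of_subdiag ha.ne' hB.sparse).symm
  have hA_conj : a ^ 2 • embed0 A₀ = D0mat r p a * embed0 A₀ * D0mat r p a :=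
    (D0mat_conj_embed0 a A₀).symm
  rw [Real.sqrt_sq ha.le, one_div, ← mul_one (a ^ 2), covMat_mul, Mbar_mul, mul_one,
    hB_conj, hA_conj]
  exact ⟨covMat_D0mat_conj ha.ne' _ _ 1, Mbar_D0mat_conj ha.ne' _ _ 1, mexp_D0mat_conj ha.ne' B⟩

/-- The homogeneity relations `C(t) = D₀(√t) C(1) D₀(√t)`,
`M̄(t) = D₀(√t) M̄(1) D₀(√t)` and `e^{tB} = D₀(√t) e^{B} D₀(1/√t)` hold for every `t > 0`. -/
theorem homogeneity_relations {r : ℕ} {p : Fin (r + 1) → ℕ}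
    (B : Matrix (Idx r p) (Idx r p) ℝ) (hB : IsKolB B)
    (A₀ : Matrix (Fin (p 0)) (Fin (p 0)) ℝ) (hA₀ : A₀.PosDef)
    (t : ℝ) (ht : 0 < t) :
    covMat B (embed0 A₀) t
        = D0mat r p (Real.sqrt t) * covMat B (embed0 A₀) 1 * D0mat r p (Real.sqrt t) ∧
    Mbar B (embed0 A₀) t
        = D0mat r p (Real.sqrt t) * Mbar B (embed0 A₀) 1 * D0mat r p (Real.sqrt t) ∧
    mexp (t • B) = D0mat r p (Real.sqrt t) * mexp B * D0mat r p (1 / Real.sqrt t) :=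
  homogeneity_relations_general B hB A₀ t ht
end
end

section
/- Let W(t) = e^{-tB^T} ∇_x, and for a multi-index β let W^β(t) = W_1^{β_1}(t) ∘ ⋯ ∘ W_d^{β_d}(t) (the components commute, being constant-coefficient first-order operators). Then there exist real constants c_α, indexed by multi-indices α with |α| = |β| and |α|_B ≥ |β|_B, with |c_α| bounded by a constant depending only on B and β, such that for every t > 0 and every smooth function f: W^β(t) f = Σ_{|α|=|β|, |α|_B ≥ |β|_B} c_α t^{(|α|_B - |β|_B)/2} D_x^α f. -/
open MeasureTheory Matrix Finset

noncomputable section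

variable {r : ℕ} {p : Fin (r + 1) → ℕ}

/-!
Since `B` maps the `k`-th group of coordinates into the `(k+1)`-th one, `(B ^ n) j i` vanishes
unless `j` lies `n` groups below `i`. Hence each entry of `e^{-tBᵀ}` is a single monomial,
`(e^{-tBᵀ})_{ij} = c_{ij} t^{g(j) - g(i)}` with `g` the group index and `c_{ij} = 0` when
`g(j) < g(i)`, so that `W_i(t) = Σ_j c_{ij} t^{(σ_j - σ_i)/2} ∂_j`. Composing such operators
multiplies the monomials, and the exponents add up to `(|α|_B - |β|_B)/2`.
-/

section DxCalculus

lemma contDiff_pdx (i : Idx r p) {f : (Idx r p → ℝ) → ℝ} (hf : ContDiff ℝ (⊤ : ℕ∞) f) :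
    ContDiff ℝ (⊤ : ℕ∞) (pdx i f) :=
  (hf.fderiv_right (m := (⊤ : ℕ∞)) le_rfl).clm_apply contDiff_const

lemma pdx_comm (i j : Idx r p) {f : (Idx r p → ℝ) → ℝ} (hf : ContDiff ℝ (⊤ : ℕ∞) f) :
    pdx i (pdx j f) = pdx j (pdx i f) := by
  funext x
  have hdf : Differentiable ℝ (fderiv ℝ f) :=
    (hf.fderiv_right (m := (⊤ : ℕ∞)) le_rfl).differentiable (by simp)
  have hsnd : ∀ a b : Idx r p,
      pdx a (pdx b f) x = fderiv ℝ (fderiv ℝ f) x (Pi.single a 1) (Pi.single b 1) := by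
    intro a b
    change fderiv ℝ (fun y => fderiv ℝ f y (Pi.single b 1)) x (Pi.single a 1) = _
    rw [fderiv_clm_apply (hdf x) (differentiableAt_const _)]
    simp
  rw [hsnd, hsnd]
  exact (hf.contDiffAt.isSymmSndFDerivAt (by simp; exact WithTop.coe_le_coe.mpr le_top)) _ _

lemma contDiff_iterate_pdx (i : Idx r p) (k : ℕ) {f : (Idx r p → ℝ) → ℝ}
    (hf : ContDiff ℝ (⊤ : ℕ∞) f) : ContDiff ℝ (⊤ : ℕ∞) ((pdx i)^[k] f) :=
  Function.Iterate.rec (fun g => ContDiff ℝ (⊤ : ℕ∞) g) hf (fun _ hg => contDiff_pdx i hg) k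

lemma contDiff_foldr_pdx (L : List (Idx r p)) (α : Idx r p → ℕ) {f : (Idx r p → ℝ) → ℝ}
    (hf : ContDiff ℝ (⊤ : ℕ∞) f) :
    ContDiff ℝ (⊤ : ℕ∞) (L.foldr (fun i g => (pdx i)^[α i] g) f) := by
  induction L with
  | nil => exact hf
  | cons a L ih => exact contDiff_iterate_pdx a (α a) ih

lemma contDiff_Dx (α : Idx r p → ℕ) {f : (Idx r p → ℝ) → ℝ} (hf : ContDiff ℝ (⊤ : ℕ∞) f) :
    ContDiff ℝ (⊤ : ℕ∞) (Dx α f) :=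
  contDiff_foldr_pdx _ α hf

lemma pdx_iterate_pdx (i j : Idx r p) (k : ℕ) {f : (Idx r p → ℝ) → ℝ}
    (hf : ContDiff ℝ (⊤ : ℕ∞) f) : pdx j ((pdx i)^[k] f) = (pdx i)^[k] (pdx j f) := by
  induction k generalizing f with
  | zero => rfl
  | succ k ih =>
    rw [Function.iterate_succ_apply, Function.iterate_succ_apply, ih (contDiff_pdx i hf),
      pdx_comm j i hf]

lemma pdx_foldr_pdx (j : Idx r p) (L : List (Idx r p)) (α : Idx r p → ℕ)
    {f : (Idx r p → ℝ) → ℝ} (hf : ContDiff ℝ (⊤ : ℕ∞) f) :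
    pdx j (L.foldr (fun i g => (pdx i)^[α i] g) f)
      = L.foldr (fun i g => (pdx i)^[α i] g) (pdx j f) := by
  induction L with
  | nil => rfl
  | cons a L ih =>
    simp only [List.foldr_cons]
    rw [pdx_iterate_pdx a j (α a) (contDiff_foldr_pdx L α hf), ih]

lemma foldr_pdx_add_single {j : Idx r p} (α : Idx r p → ℕ) {L : List (Idx r p)}
    (hjL : j ∈ L) (hL : L.Nodup) {f : (Idx r p → ℝ) → ℝ} (hf : ContDiff ℝ (⊤ : ℕ∞) f) :
    L.foldr (fun i g => (pdx i)^[(α + Pi.single j 1 : Idx r p → ℕ) i] g) f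
      = L.foldr (fun i g => (pdx i)^[α i] g) (pdx j f) := by
  induction L with
  | nil => simp at hjL
  | cons a L ih =>
    obtain ⟨haL, hL⟩ := List.nodup_cons.mp hL
    simp only [List.foldr_cons]
    by_cases ha : a = j
    · subst ha
      have hrest : L.foldr (fun i g => (pdx i)^[(α + Pi.single a 1 : Idx r p → ℕ) i] g) f
          = L.foldr (fun i g => (pdx i)^[α i] g) f :=
        List.foldr_ext _ _ _ fun k hk _ => by
          rw [Pi.add_apply, Pi.single_eq_of_ne (ne_of_mem_of_not_mem hk haL), add_zero]
      rw [hrest, Pi.add_apply, Pi.single_eq_same, Function.iterate_succ_apply,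
        pdx_foldr_pdx a L α hf]
    · rw [Pi.add_apply, Pi.single_eq_of_ne ha, add_zero,
        ih ((List.mem_cons.mp hjL).resolve_left (Ne.symm ha)) hL]

lemma Dx_add_single (j : Idx r p) (α : Idx r p → ℕ) {f : (Idx r p → ℝ) → ℝ}
    (hf : ContDiff ℝ (⊤ : ℕ∞) f) : Dx (α + Pi.single j 1) f = pdx j (Dx α f) := by
  rw [Dx, Dx, foldr_pdx_add_single α (Finset.mem_toList.mpr (Finset.mem_univ j))
    Finset.univ.nodup_toList hf, pdx_foldr_pdx j _ α hf]

lemma Dx_zero (f : (Idx r p → ℝ) → ℝ) : Dx 0 f = f := by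
  simp [Dx]

lemma pdx_sum_mul (j : Idx r p) {ι : Type*} (s : Finset ι) (c : ι → ℝ)
    (g : ι → (Idx r p → ℝ) → ℝ) {x : Idx r p → ℝ}
    (hg : ∀ a ∈ s, DifferentiableAt ℝ (g a) x) :
    pdx j (fun y => ∑ a ∈ s, c a * g a y) x = ∑ a ∈ s, c a * pdx j (g a) x := by
  rw [pdx, fderiv_fun_sum fun a ha => (hg a ha).const_mul (c a), _root_.sum_apply]
  refine Finset.sum_congr rfl fun a ha => ?_
  rw [fderiv_const_mul (hg a ha)]
  rfl

end DxCalculus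

section NilpotentExp

def IsBlockSubdiagonal (B : Matrix (Idx r p) (Idx r p) ℝ) : Prop :=
  ∀ j k : Idx r p, (j.1 : ℕ) ≠ k.1 + 1 → B j k = 0

variable {B : Matrix (Idx r p) (Idx r p) ℝ}

lemma IsBlockSubdiagonal.pow_apply_eq_zero (hB : IsBlockSubdiagonal B) (n : ℕ) {j k : Idx r p}
    (h : (j.1 : ℕ) ≠ k.1 + n) : (B ^ n) j k = 0 := by
  induction n generalizing j with
  | zero => exact Matrix.one_apply_ne fun hjk => h (by rw [hjk, add_zero])
  | succ n ih =>
    rw [pow_succ', Matrix.mul_apply]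
    refine Finset.sum_eq_zero fun m _ => ?_
    by_cases hjm : (j.1 : ℕ) = m.1 + 1
    · rw [ih (by omega), mul_zero]
    · rw [hB j m hjm, zero_mul]

def wCoeff (B : Matrix (Idx r p) (Idx r p) ℝ) (i j : Idx r p) : ℝ :=
  (-1) ^ ((j.1 : ℕ) - i.1) / (((j.1 : ℕ) - i.1).factorial : ℝ) * (B ^ ((j.1 : ℕ) - i.1)) j i

lemma wCoeff_eq_zero {i j : Idx r p} (h : (j.1 : ℕ) < i.1) : wCoeff B i j = 0 := by
  have hji : j ≠ i := by rintro rfl; exact lt_irrefl _ h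
  simp [wCoeff, Nat.sub_eq_zero_of_le h.le, Matrix.one_apply_ne hji]

lemma IsBlockSubdiagonal.mexp_neg_smul_transpose_apply (hB : IsBlockSubdiagonal B) (t : ℝ)
    (i j : Idx r p) :
    mexp (-(t • Bᵀ)) i j = wCoeff B i j * t ^ ((j.1 : ℕ) - i.1) := by
  have hterm : ∀ n : ℕ, ((n.factorial : ℝ)⁻¹ • (-(t • Bᵀ)) ^ n) i j
      = (-1) ^ n / (n.factorial : ℝ) * (B ^ n) j i * t ^ n := by
    intro n
    rw [← neg_smul, smul_pow, ← Matrix.transpose_pow, Matrix.smul_apply, Matrix.smul_apply,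
      Matrix.transpose_apply, smul_eq_mul, smul_eq_mul, neg_pow]
    ring
  rw [mexp, Matrix.of_apply, tsum_eq_single ((j.1 : ℕ) - i.1), hterm, wCoeff]
  intro n hn
  rw [hterm, hB.pow_apply_eq_zero n (by omega), mul_zero, zero_mul]

lemma IsBlockSubdiagonal.Wop_apply (hB : IsBlockSubdiagonal B) (t : ℝ) (i : Idx r p)
    (f : (Idx r p → ℝ) → ℝ) (x : Idx r p → ℝ) :
    Wop B t i f x = ∑ j, wCoeff B i j * t ^ ((j.1 : ℕ) - i.1) * pdx j f x := by
  simp only [Wop, Matrix.mulVec, dotProduct, hB.mexp_neg_smul_transpose_apply]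

end NilpotentExp

section MultiIndex

/-- `Wset β = lenBwtSet |β| |β|_B`. -/
def lenBwtSet (n w : ℕ) : Finset (Idx r p → ℕ) :=
  (Fintype.piFinset fun _ : Idx r p => Finset.range (n + 1)).filter
    fun α => ∑ j, α j = n ∧ w ≤ bwt α

lemma mem_lenBwtSet {n w : ℕ} {α : Idx r p → ℕ} :
    α ∈ lenBwtSet n w ↔ ∑ j, α j = n ∧ w ≤ bwt α := by
  rw [lenBwtSet, Finset.mem_filter, Fintype.mem_piFinset, and_iff_right_iff_imp]
  rintro ⟨hn, -⟩ j
  exact Finset.mem_range_succ_iff.mpr (hn ▸ Finset.single_le_sum (by simp) (Finset.mem_univ j))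

lemma sum_add_single (α : Idx r p → ℕ) (j : Idx r p) :
    ∑ k, (α + Pi.single j 1 : Idx r p → ℕ) k = ∑ k, α k + 1 := by
  simp [Finset.sum_add_distrib]

lemma bwt_add_single (α : Idx r p → ℕ) (j : Idx r p) :
    bwt (α + Pi.single j 1) = bwt α + sigmaWt j := by
  simp [bwt, mul_add, Finset.sum_add_distrib, Pi.single_apply]

lemma add_single_mem_lenBwtSet {n w : ℕ} {α : Idx r p → ℕ} (hα : α ∈ lenBwtSet n w)
    {i j : Idx r p} (hij : (i.1 : ℕ) ≤ j.1) :
    α + Pi.single j 1 ∈ lenBwtSet (n + 1) (w + sigmaWt i) := by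
  rw [mem_lenBwtSet] at hα ⊢
  have hσ : sigmaWt i ≤ sigmaWt j := by unfold sigmaWt; omega
  rw [sum_add_single, bwt_add_single]
  omega

lemma rpow_bwt_add_single {t : ℝ} (ht : 0 < t) (w : ℕ) (α : Idx r p → ℕ) {i j : Idx r p}
    (hij : (i.1 : ℕ) ≤ j.1) :
    t ^ (((bwt (α + Pi.single j 1) : ℝ) - ((w + sigmaWt i : ℕ) : ℝ)) / 2)
      = t ^ (((bwt α : ℝ) - w) / 2) * t ^ ((j.1 : ℕ) - i.1) := by
  rw [← Real.rpow_natCast, ← Real.rpow_add ht, bwt_add_single, sigmaWt, sigmaWt]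
  push_cast [Nat.cast_sub hij]
  ring_nf

end MultiIndex

section Expansion

def HasDxExpansion (P : ℝ → ((Idx r p → ℝ) → ℝ) → (Idx r p → ℝ) → ℝ) (n w : ℕ) : Prop :=
  ∃ c : (Idx r p → ℕ) → ℝ, ∀ t : ℝ, 0 < t → ∀ f : (Idx r p → ℝ) → ℝ,
    ContDiff ℝ (⊤ : ℕ∞) f → ∀ x : Idx r p → ℝ,
      P t f x = ∑ α ∈ lenBwtSet n w, c α * t ^ (((bwt α : ℝ) - w) / 2) * Dx α f x

lemma hasDxExpansion_id : HasDxExpansion (r := r) (p := p) (fun _ f => f) 0 0 := by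
  refine ⟨Pi.single 0 1, fun t _ f _ x => ?_⟩
  rw [Finset.sum_eq_single_of_mem 0 (mem_lenBwtSet.mpr (by simp))
    fun α _ hα => by rw [Pi.single_eq_of_ne hα, zero_mul, zero_mul]]
  simp [bwt, Dx_zero]

variable {B : Matrix (Idx r p) (Idx r p) ℝ}

lemma HasDxExpansion.wop (hB : IsBlockSubdiagonal B)
    {P : ℝ → ((Idx r p → ℝ) → ℝ) → (Idx r p → ℝ) → ℝ} {n w : ℕ}
    (hP : HasDxExpansion P n w) (i : Idx r p) :
    HasDxExpansion (fun t f => Wop B t i (P t f)) (n + 1) (w + sigmaWt i) := by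
  obtain ⟨c, hc⟩ := hP
  refine ⟨fun α' => ∑ j, ∑ α ∈ lenBwtSet n w,
    if α + Pi.single j 1 = α' then wCoeff B i j * c α else 0, fun t ht f hf x => ?_⟩
  have hpdx : ∀ j, pdx j (P t f) x = ∑ α ∈ lenBwtSet n w,
      c α * t ^ (((bwt α : ℝ) - w) / 2) * Dx (α + Pi.single j 1) f x := by
    intro j
    rw [funext (hc t ht f hf), pdx_sum_mul j _ _ _
      fun α _ => (contDiff_Dx α hf).differentiable (by simp) x]
    simp_rw [Dx_add_single j _ hf]
  have hterm : ∀ j, ∀ α ∈ lenBwtSet n w,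
      wCoeff B i j * t ^ ((j.1 : ℕ) - i.1) * (c α * t ^ (((bwt α : ℝ) - w) / 2) *
        Dx (α + Pi.single j 1) f x)
      = if α + Pi.single j 1 ∈ lenBwtSet (n + 1) (w + sigmaWt i) then wCoeff B i j * c α *
          t ^ (((bwt (α + Pi.single j 1) : ℝ) - ((w + sigmaWt i : ℕ) : ℝ)) / 2) *
          Dx (α + Pi.single j 1) f x else 0 := by
    intro j α hα
    by_cases hij : (i.1 : ℕ) ≤ j.1
    · rw [if_pos (add_single_mem_lenBwtSet hα hij), rpow_bwt_add_single ht w α hij]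
      ring
    · rw [wCoeff_eq_zero (not_le.mp hij)]
      simp
  simp only [hB.Wop_apply, hpdx, Finset.mul_sum, Finset.sum_mul, ite_mul, zero_mul]
  rw [Finset.sum_comm (s := lenBwtSet (n + 1) (w + sigmaWt i))]
  refine Finset.sum_congr rfl fun j _ => ?_
  rw [Finset.sum_comm]
  refine Finset.sum_congr rfl fun α hα => ?_
  rw [Finset.sum_ite_eq, hterm j α hα]

lemma HasDxExpansion.iterate_wop (hB : IsBlockSubdiagonal B)
    {P : ℝ → ((Idx r p → ℝ) → ℝ) → (Idx r p → ℝ) → ℝ} {n w : ℕ}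
    (hP : HasDxExpansion P n w) (i : Idx r p) (k : ℕ) :
    HasDxExpansion (fun t f => (Wop B t i)^[k] (P t f)) (k + n) (sigmaWt i * k + w) := by
  induction k with
  | zero => simpa using hP
  | succ k ih =>
    simp only [Function.iterate_succ_apply']
    convert ih.wop hB i using 1 <;> ring

lemma hasDxExpansion_foldr_wop (hB : IsBlockSubdiagonal B)
    (β : Idx r p → ℕ) (L : List (Idx r p)) :
    HasDxExpansion (fun t f => L.foldr (fun i g => (Wop B t i)^[β i] g) f)
      (L.map β).sum (L.map fun i => sigmaWt i * β i).sum := by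
  induction L with
  | nil => exact hasDxExpansion_id
  | cons a L ih =>
    simpa only [List.map_cons, List.sum_cons, List.foldr_cons] using ih.iterate_wop hB a (β a)

end Expansion

/-- Representation of `W^β(t) = (e^{-tBᵀ}∇_x)^β`: there exist constants
`c_α`, indexed by `α` with `|α| = |β|` and `|α|_B ≥ |β|_B` (hence depending only on `B` and
`β`), such that for every `t > 0` and every smooth `f`,
`W^β(t) f = Σ_α c_α t^{(|α|_B - |β|_B)/2} D^α f`. -/
theorem Wpow_representation {r : ℕ} {p : Fin (r + 1) → ℕ}
    (B : Matrix (Idx r p) (Idx r p) ℝ) (hB : IsKolB B) (β : Idx r p → ℕ) :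
    ∃ c : (Idx r p → ℕ) → ℝ,
      ∀ t : ℝ, 0 < t → ∀ f : (Idx r p → ℝ) → ℝ, ContDiff ℝ (⊤ : ℕ∞) f →
        ∀ x : Idx r p → ℝ,
        Wpow B t β f x
          = ∑ α ∈ Wset β, c α * t ^ (((bwt α : ℝ) - (bwt β : ℝ)) / 2) * Dx α f x := by
  have h := hasDxExpansion_foldr_wop hB.sparse β (Finset.univ : Finset (Idx r p)).toList
  rw [Finset.sum_map_toList, Finset.sum_map_toList] at h
  exact h
end
end
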